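/- Let F ∈ F_q^{M×n} and G ∈ F_q^{N×n} satisfy rank([F; G]) = rank(F) + N. Then there exists a matrix P ∈ F_q^{n×N} such that F·P = 0 and rank(G·P) = N. -/

import Mathlib

/-!
Rank–nullity applied to `[F; G]`, to `F`, and to `G` restricted to `ker F` gives
`rank [F; G] = rank F + dim G(ker F)`. The hypothesis therefore says that `G` maps `ker F` onto
`𝔽 ^ N`, and the columns of `P` can be taken to be preimages in `ker F` of the standard basis,
so that `F * P = 0` and `G * P = 1`.
-/

open Module LinearMap

theorem Submodule.finrank_map_add_finrank_inf_ker {K V W : Type*} [DivisionRing K]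
    [AddCommGroup V] [Module K V] [AddCommGroup W] [Module K W] (p : Submodule K V)
    [FiniteDimensional K p] (g : V →ₗ[K] W) :
    finrank K (p.map g) + finrank K (p ⊓ ker g : Submodule K V) = finrank K p := by
  have hker : ker (g.domRestrict p) = comap p.subtype (p ⊓ ker g) := by
    rw [ker_domRestrict, Submodule.comap_inf, Submodule.comap_subtype_self, top_inf_eq]
  rw [← range_domRestrict, ← (Submodule.comapSubtypeEquivOfLe inf_le_left).finrank_eq, ← hker,
    finrank_range_add_finrank_ker]

namespace Matrix

variable {K : Type*} [Field K] {l m n : Type*} [Fintype n]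

theorem rank_add_finrank_ker_mulVecLin (A : Matrix m n K) :
    A.rank + finrank K (ker A.mulVecLin) = Fintype.card n := by
  rw [rank, finrank_range_add_finrank_ker, finrank_fintype_fun_eq_card]

theorem ker_mulVecLin_fromRows {R : Type*} [CommSemiring R] (A : Matrix l n R) (B : Matrix m n R) :
    ker (fromRows A B).mulVecLin = ker A.mulVecLin ⊓ ker B.mulVecLin := by
  ext v
  simp [fromRows_mulVec, ← Sum.elim_zero_zero, Sum.elim_eq_iff]

theorem rank_fromRows (A : Matrix l n K) (B : Matrix m n K) :
    (fromRows A B).rank = A.rank + finrank K ((ker A.mulVecLin).map B.mulVecLin) := by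
  have hAB := rank_add_finrank_ker_mulVecLin (fromRows A B)
  have hA := rank_add_finrank_ker_mulVecLin A
  have hmap := (ker A.mulVecLin).finrank_map_add_finrank_inf_ker B.mulVecLin
  rw [ker_mulVecLin_fromRows] at hAB
  omega

theorem exists_mul_eq_zero_and_mul_eq_one {R : Type*} [CommRing R] [Fintype m] [DecidableEq m]
    [DecidableEq n] (A : Matrix l n R) (B : Matrix m n R)
    (h : (ker A.mulVecLin).map B.mulVecLin = ⊤) :
    ∃ P : Matrix n m R, A * P = 0 ∧ B * P = 1 := by
  obtain ⟨s, hs⟩ :=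
    (B.mulVecLin.domRestrict (ker A.mulVecLin)).exists_rightInverse_of_surjective
      (by rw [range_domRestrict, h])
  refine ⟨toMatrix' ((ker A.mulVecLin).subtype ∘ₗ s), ?_, ?_⟩
  · apply toLin'.injective
    refine LinearMap.ext fun v => ?_
    simp only [toLin'_mul, toLin'_toMatrix', coe_comp, Submodule.coe_subtype, Function.comp_apply,
      toLin'_apply, map_zero, LinearMap.zero_apply]
    exact (s v).2
  · apply toLin'.injective
    refine LinearMap.ext fun v => ?_
    simpa using LinearMap.congr_fun hs v

end Matrix

theorem exists_encoding_matrix_general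
    {𝔽 : Type*} [Field 𝔽] {M N n : ℕ}
    (F : Matrix (Fin M) (Fin n) 𝔽) (G : Matrix (Fin N) (Fin n) 𝔽)
    (h : (Matrix.fromRows F G).rank = F.rank + N) :
    ∃ P : Matrix (Fin n) (Fin N) 𝔽, F * P = 0 ∧ (G * P).rank = N := by
  have hmap : finrank 𝔽 ((ker F.mulVecLin).map G.mulVecLin) = N := by
    rw [Matrix.rank_fromRows] at h
    omega
  obtain ⟨P, hFP, hGP⟩ := Matrix.exists_mul_eq_zero_and_mul_eq_one F G
    (Submodule.eq_top_of_finrank_eq (by rw [hmap, finrank_fin_fun]))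
  exact ⟨P, hFP, by rw [hGP, Matrix.rank_one, Fintype.card_fin]⟩

/-- Existence of an encoding matrix: if rank([F;G]) = rank(F) + N, then there is
`P` with `F * P = 0` and `rank (G * P) = N`. -/
theorem exists_encoding_matrix
    {𝔽 : Type*} [Field 𝔽] [Fintype 𝔽] {M N n : ℕ}
    (F : Matrix (Fin M) (Fin n) 𝔽) (G : Matrix (Fin N) (Fin n) 𝔽)
    (h : (Matrix.fromRows F G).rank = F.rank + N) :
    ∃ P : Matrix (Fin n) (Fin N) 𝔽, F * P = 0 ∧ (G * P).rank = N :=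
  exists_encoding_matrix_general F G h
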